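/- arXiv:2309.11736 — 3 statements merged into one kernel-verified Lean document; each statement's English description precedes it below -/
import Mathlib

section
/- Let T(β) = aA/(f_L·β^k) + A·I·β^{1−p}/f_O with 0 < p < 1 and a, A, I, f_L, f_O, k > 0, and let μ = ((a·k·f_O)/(f_L·I·(1−p)))^{1/(k+1−p)}. For 0 < η₁ ≤ η₂, the minimizer of T over [η₁, η₂] equals η₁ if μ ≤ η₁, equals μ if η₁ < μ ≤ η₂, and equals η₂ if μ > η₂. -/
open Real in
/-- Closed-form optimal semantic extraction factor: with 0 < p < 1 and
μ = ((a·k·f_O)/(f_L·I·(1−p)))^{1/(k+1−p)}, the minimizer of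
T(β) = aA/(f_L·β^k) + A·I·β^{1−p}/f_O over [η₁,η₂] (0 < η₁ ≤ η₂) is η₁ if
μ ≤ η₁, μ if η₁ < μ ≤ η₂, and η₂ if μ > η₂. -/
theorem stmt_8 (a A I fL fO k p η₁ η₂ : ℝ) (ha : 0 < a) (hA : 0 < A) (hI : 0 < I)
    (hfL : 0 < fL) (hfO : 0 < fO) (hk : 0 < k) (hp0 : 0 < p) (hp1 : p < 1)
    (hη₁ : 0 < η₁) (hη : η₁ ≤ η₂) :
    let T : ℝ → ℝ := fun β => a * A / (fL * β ^ k) + A * I * β ^ (1 - p) / fO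
    let μ : ℝ := ((a * k * fO) / (fL * I * (1 - p))) ^ (1 / (k + 1 - p))
    (μ ≤ η₁ → ∀ β ∈ Set.Icc η₁ η₂, T η₁ ≤ T β) ∧
    (η₁ < μ → μ ≤ η₂ → ∀ β ∈ Set.Icc η₁ η₂, T μ ≤ T β) ∧
    (η₂ < μ → ∀ β ∈ Set.Icc η₁ η₂, T η₂ ≤ T β) := by
  intro T μ
  set q : ℝ := k + 1 - p with hq_def
  have hq : 0 < q := by simp only [hq_def]; linarith
  set R : ℝ := (a * k * fO) / (fL * I * (1 - p)) with hR_def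
  have h1p : 0 < 1 - p := by linarith
  have hR : 0 < R := by
    apply div_pos (by positivity) (by positivity)
  have hμ : 0 < μ := Real.rpow_pos_of_pos hR _
  have hμq : μ ^ q = R := by
    show (R ^ (1 / q)) ^ q = R
    rw [← Real.rpow_mul hR.le, one_div, inv_mul_cancel₀ hq.ne', Real.rpow_one]
  set C : ℝ := A * I * (1 - p) / fO with hC_def
  have hC : 0 < C := by positivity
  set D : ℝ → ℝ := fun x => a * A / fL * (-k * x ^ (-k - 1)) +
    A * I / fO * ((1 - p) * x ^ (1 - p - 1)) with hD_def
  -- key factorization of the derivative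
  have key : ∀ x : ℝ, 0 < x → D x = C * x ^ (-p - q) * (x ^ q - R) := by
    intro x hx
    have e1 : x ^ (-k - 1) = x ^ (-p - q) := by
      congr 1; simp only [hq_def]; ring
    have e2 : x ^ (1 - p - 1) = x ^ (-p - q) * x ^ q := by
      rw [← Real.rpow_add hx]; congr 1; ring
    simp only [hD_def, hC_def, hR_def, e1, e2]
    field_simp
    ring
  have hTderiv : ∀ x : ℝ, 0 < x → HasDerivAt T (D x) x := by
    intro x hx
    have h1 : HasDerivAt (fun y : ℝ => y ^ (-k)) (-k * x ^ (-k - 1)) x := by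
      simpa using Real.hasDerivAt_rpow_const (p := -k) (Or.inl hx.ne')
    have h2 : HasDerivAt (fun y : ℝ => y ^ (1 - p)) ((1 - p) * x ^ (1 - p - 1)) x :=
      Real.hasDerivAt_rpow_const (Or.inl hx.ne')
    have hg : HasDerivAt (fun y : ℝ => a * A / fL * y ^ (-k) + A * I / fO * y ^ (1 - p))
        (D x) x := (h1.const_mul _).add (h2.const_mul _)
    apply hg.congr_of_eventuallyEq
    filter_upwards [Ioi_mem_nhds hx] with y hy
    have hy0 : (0 : ℝ) < y := hy
    have hyk : (0 : ℝ) < y ^ k := Real.rpow_pos_of_pos hy0 k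
    show T y = _
    simp only [T]
    rw [Real.rpow_neg hy0.le]
    field_simp
  have hTcont : ∀ x : ℝ, 0 < x → ContinuousAt T x := by
    intro x hx
    have h1 : ContinuousAt (fun y : ℝ => y ^ k) x :=
      Real.continuousAt_rpow_const x k (Or.inl hx.ne')
    have h2 : ContinuousAt (fun y : ℝ => y ^ (1 - p)) x :=
      Real.continuousAt_rpow_const x (1 - p) (Or.inl hx.ne')
    have hne : fL * x ^ k ≠ 0 := by
      have : (0:ℝ) < x ^ k := Real.rpow_pos_of_pos hx k
      positivity
    exact (continuousAt_const.div (continuousAt_const.mul h1) hne).add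
      ((continuousAt_const.mul h2).div_const fO)
  have hDpos : ∀ x : ℝ, μ < x → 0 < D x := by
    intro x hx
    have hx0 : 0 < x := hμ.trans hx
    rw [key x hx0]
    have hlt : R < x ^ q := by
      rw [← hμq]; exact Real.rpow_lt_rpow hμ.le hx hq
    exact mul_pos (mul_pos hC (Real.rpow_pos_of_pos hx0 _)) (by linarith)
  have hDneg : ∀ x : ℝ, 0 < x → x < μ → D x < 0 := by
    intro x hx0 hx
    rw [key x hx0]
    have hlt : x ^ q < R := by
      rw [← hμq]; exact Real.rpow_lt_rpow hx0.le hx hq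
    exact mul_neg_of_pos_of_neg (mul_pos hC (Real.rpow_pos_of_pos hx0 _)) (by linarith)
  -- monotone on [μ, ∞)
  have hmono : StrictMonoOn T (Set.Ici μ) := by
    apply strictMonoOn_of_deriv_pos (convex_Ici μ)
    · exact fun x hx => (hTcont x (lt_of_lt_of_le hμ hx)).continuousWithinAt
    · intro x hx
      rw [interior_Ici] at hx
      rw [(hTderiv x (hμ.trans hx)).deriv]
      exact hDpos x hx
  -- antitone on (0, μ]
  have hanti : StrictAntiOn T (Set.Ioc 0 μ) := by
    apply strictAntiOn_of_deriv_neg (convex_Ioc 0 μ)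
    · exact fun x hx => (hTcont x hx.1).continuousWithinAt
    · intro x hx
      rw [interior_Ioc] at hx
      rw [(hTderiv x hx.1).deriv]
      exact hDneg x hx.1 hx.2
  refine ⟨?_, ?_, ?_⟩
  · intro hμη₁ β hβ
    exact hmono.monotoneOn hμη₁ (le_trans hμη₁ hβ.1) hβ.1
  · intro h1' h2' β hβ
    have hβ0 : 0 < β := lt_of_lt_of_le hη₁ hβ.1
    rcases le_or_gt β μ with hcase | hcase
    · exact hanti.antitoneOn ⟨hβ0, hcase⟩ ⟨hμ, le_refl μ⟩ hcase
    · exact hmono.monotoneOn (le_refl μ) hcase.le hcase.le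
  · intro hη₂μ β hβ
    have hβ0 : 0 < β := lt_of_lt_of_le hη₁ hβ.1
    exact hanti.antitoneOn ⟨hβ0, le_trans hβ.2 hη₂μ.le⟩ ⟨hη₁.trans_le hη, hη₂μ.le⟩ hβ.2
end

section
/- At every optimal solution of problem (13), the MEC computation resource constraint Σ_{n=1}^N e^{f̃_n^O} ≤ F_MEC holds with equality. -/
open Real in
/-- Theorem 1(c): at every optimal solution of problem (13), the MEC
computation resource constraint Σ_n e^{f̃_n^O} ≤ F_MEC holds with equality. -/
theorem stmt_12 (N : ℕ) (hN : 0 < N) (a k p F : ℝ) (A I βe fL tT : Fin N → ℝ)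
    (ha : 0 < a) (hp : 1 < p) (hF : 0 < F) (hA : ∀ n, 0 < A n) (hI : ∀ n, 0 < I n)
    (Feasible : (Fin N → ℝ) → ℝ → Prop)
    (hFeasible : ∀ fO t, Feasible fO t ↔
      ((∀ n, a * A n * Real.exp (-k * βe n - fL n) + tT n +
        A n * I n * Real.exp ((1 - p) * βe n - fO n) ≤ t) ∧
       ∑ n, Real.exp (fO n) ≤ F))
    (fO : Fin N → ℝ) (t : ℝ)
    (hfeas : Feasible fO t) (hopt : ∀ fO' t', Feasible fO' t' → t ≤ t') :
    ∑ n, Real.exp (fO n) = F := by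
  rw [hFeasible] at hfeas
  obtain ⟨hdelay, hsum⟩ := hfeas
  by_contra hne
  have hlt : ∑ n, Real.exp (fO n) < F := lt_of_le_of_ne hsum hne
  have hNe : Nonempty (Fin N) := ⟨⟨0, hN⟩⟩
  have hSpos : 0 < ∑ n, Real.exp (fO n) :=
    Finset.sum_pos (fun n _ => Real.exp_pos _) Finset.univ_nonempty
  set S := ∑ n, Real.exp (fO n) with hS
  set c := F / S with hc
  have hc1 : 1 < c := (one_lt_div hSpos).mpr hlt
  set fO' : Fin N → ℝ := fun n => fO n + Real.log c with hfO'
  have hexp : ∀ n, Real.exp (fO' n) = c * Real.exp (fO n) := by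
    intro n
    rw [hfO']
    simp only []
    rw [Real.exp_add, Real.exp_log (by linarith), mul_comm]
  -- new delay function
  set g : Fin N → ℝ := fun n => a * A n * Real.exp (-k * βe n - fL n) + tT n +
      A n * I n * Real.exp ((1 - p) * βe n - fO' n) with hg
  have hglt : ∀ n, g n < t := by
    intro n
    refine lt_of_lt_of_le ?_ (hdelay n)
    have h1 : Real.exp ((1 - p) * βe n - fO' n) < Real.exp ((1 - p) * βe n - fO n) := by
      apply Real.exp_lt_exp.mpr
      have : 0 < Real.log c := Real.log_pos hc1
      simp only [hfO']
      linarith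
    have h2 : 0 < A n * I n := mul_pos (hA n) (hI n)
    have := mul_lt_mul_of_pos_left h1 h2
    simp only [hg]
    linarith
  set t' := (Finset.univ.image g).max' (by
    apply Finset.image_nonempty.mpr
    exact Finset.univ_nonempty) with ht'
  have ht'lt : t' < t := by
    obtain ⟨m, _, hm⟩ := Finset.mem_image.mp ((Finset.univ.image g).max'_mem _)
    rw [ht'] at *
    rw [← hm]
    exact hglt m
  have hfeas' : Feasible fO' t' := by
    rw [hFeasible]
    constructor
    · intro n
      exact Finset.le_max' (Finset.univ.image g) (g n) (Finset.mem_image.mpr ⟨n, Finset.mem_univ n, rfl⟩)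
    · have : ∑ n, Real.exp (fO' n) = c * S := by
        rw [hS, Finset.mul_sum]
        exact Finset.sum_congr rfl fun n _ => hexp n
      rw [this, hc, div_mul_cancel₀ _ (ne_of_gt hSpos)]
  exact absurd (hopt fO' t' hfeas') (not_le.mpr ht'lt)
end

section
/- For fixed h, B, σ², β, A > 0 and energy cap ν(t) = min{ν₀, p^max·t} with ν₀, p^max > 0, the function φ(t) = t·B·log₂(1 + h·ν(t)/(t·σ²)) is nondecreasing in t on (0,∞). Hence the set of feasible transmission times {t > 0 : φ(t) ≥ βA} is an interval of the form [t*, ∞), justifying the bisection in Algorithm 2. -/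
lemma aux1 (x y : ℝ) (hx : 0 < x) (hxy : x ≤ y) :
    x * Real.log (1 + y) ≤ y * Real.log (1 + x) := by
  have hy : 0 < y := hx.trans_le hxy
  have hc := strictConcaveOn_log_Ioi.concaveOn.2
    (show (1 + y) ∈ Set.Ioi (0:ℝ) by simp [Set.mem_Ioi]; linarith)
    (show (1:ℝ) ∈ Set.Ioi (0:ℝ) by simp)
    (div_nonneg hx.le hy.le)
    (show (0:ℝ) ≤ 1 - x / y by rw [sub_nonneg]; exact (div_le_one hy).2 hxy)
    (by ring)
  have harg : x / y * (1 + y) + (1 - x / y) * 1 = 1 + x := by field_simp; ring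
  simp only [smul_eq_mul, harg, Real.log_one, mul_zero, add_zero] at hc
  calc x * Real.log (1 + y) = y * (x / y * Real.log (1 + y)) := by
        field_simp
    _ ≤ y * Real.log (1 + x) := mul_le_mul_of_nonneg_left hc hy.le

lemma aux2 (d s t : ℝ) (hd : 0 < d) (hs : 0 < s) (hst : s ≤ t) :
    s * Real.log (1 + d / s) ≤ t * Real.log (1 + d / t) := by
  have ht : 0 < t := hs.trans_le hst
  have key := aux1 (d / t) (d / s) (div_pos hd ht)
    (div_le_div_of_nonneg_left hd.le hs hst)
  have h1 : d / t * Real.log (1 + d / s) = (d / (s * t)) * (s * Real.log (1 + d / s)) := by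
    field_simp
  have h2 : d / s * Real.log (1 + d / t) = (d / (s * t)) * (t * Real.log (1 + d / t)) := by
    field_simp
  rw [h1, h2] at key
  exact le_of_mul_le_mul_left key (div_pos hd (mul_pos hs ht))

open Real in
/-- φ(t) = t·B·log₂(1 + h·min{ν₀, p^max·t}/(t·σ²)) is nondecreasing on (0,∞),
hence the feasible transmission-time set {t > 0 : φ(t) ≥ βA}, when nonempty,
is an interval of the form [t*, ∞). -/
theorem stmt_16 (h B σ2 β A ν₀ pmax : ℝ) (hh : 0 < h) (hB : 0 < B) (hσ : 0 < σ2)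
    (hβ : 0 < β) (hA : 0 < A) (hν : 0 < ν₀) (hpmax : 0 < pmax) :
    let φ : ℝ → ℝ := fun t => t * (B * Real.logb 2 (1 + h * min ν₀ (pmax * t) / (t * σ2)))
    MonotoneOn φ (Set.Ioi 0) ∧
    ({t : ℝ | 0 < t ∧ β * A ≤ φ t}.Nonempty →
      ∃ tstar : ℝ, 0 < tstar ∧ {t : ℝ | 0 < t ∧ β * A ≤ φ t} = Set.Ici tstar) := by
  intro φ
  have hlog2 : (0:ℝ) < Real.log 2 := Real.log_pos one_lt_two
  have key : ∀ s t : ℝ, 0 < s → s ≤ t →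
      s * Real.log (1 + h * min ν₀ (pmax * s) / (s * σ2)) ≤
      t * Real.log (1 + h * min ν₀ (pmax * t) / (t * σ2)) := by
    intro s t hs hst
    have ht : 0 < t := hs.trans_le hst
    by_cases h1 : pmax * t ≤ ν₀
    · have hms : min ν₀ (pmax * s) = pmax * s :=
        min_eq_right (le_trans (by nlinarith) h1)
      have hmt : min ν₀ (pmax * t) = pmax * t := min_eq_right h1
      rw [hms, hmt]
      have es : h * (pmax * s) / (s * σ2) = h * pmax / σ2 := by field_simp
      have et : h * (pmax * t) / (t * σ2) = h * pmax / σ2 := by field_simp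
      rw [es, et]
      have hl : 0 ≤ Real.log (1 + h * pmax / σ2) :=
        Real.log_nonneg (by nlinarith [div_pos (mul_pos hh hpmax) hσ])
      exact mul_le_mul_of_nonneg_right hst hl
    · push_neg at h1
      have hd : 0 < h * ν₀ / σ2 := div_pos (mul_pos hh hν) hσ
      by_cases h2 : ν₀ ≤ pmax * s
      · rw [min_eq_left h2, min_eq_left h1.le]
        have es : h * ν₀ / (s * σ2) = (h * ν₀ / σ2) / s := by field_simp
        have et : h * ν₀ / (t * σ2) = (h * ν₀ / σ2) / t := by field_simp
        rw [es, et]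
        exact aux2 _ s t hd hs hst
      · push_neg at h2
        set t0 := ν₀ / pmax with ht0def
        have ht0 : 0 < t0 := div_pos hν hpmax
        have hst0 : s ≤ t0 := (le_div_iff₀ hpmax).2 (by linarith)
        have ht0t : t0 ≤ t := (div_le_iff₀ hpmax).2 (by linarith)
        rw [min_eq_right h2.le, min_eq_left h1.le]
        have es : h * (pmax * s) / (s * σ2) = (h * ν₀ / σ2) / t0 := by
          rw [ht0def]; field_simp
        have et : h * ν₀ / (t * σ2) = (h * ν₀ / σ2) / t := by field_simp
        rw [es, et]
        have hl : 0 ≤ Real.log (1 + (h * ν₀ / σ2) / t0) :=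
          Real.log_nonneg (by nlinarith [div_pos hd ht0])
        calc s * Real.log (1 + (h * ν₀ / σ2) / t0)
            ≤ t0 * Real.log (1 + (h * ν₀ / σ2) / t0) :=
              mul_le_mul_of_nonneg_right hst0 hl
          _ ≤ t * Real.log (1 + (h * ν₀ / σ2) / t) := aux2 _ t0 t hd ht0 ht0t
  have hmono : MonotoneOn φ (Set.Ioi 0) := by
    intro s hs t ht hst
    simp only [φ, Real.logb]
    have k := key s t hs hst
    have c1 : s * (B * (Real.log (1 + h * min ν₀ (pmax * s) / (s * σ2)) / Real.log 2))
        = (B / Real.log 2) * (s * Real.log (1 + h * min ν₀ (pmax * s) / (s * σ2))) := by ring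
    have c2 : t * (B * (Real.log (1 + h * min ν₀ (pmax * t) / (t * σ2)) / Real.log 2))
        = (B / Real.log 2) * (t * Real.log (1 + h * min ν₀ (pmax * t) / (t * σ2))) := by ring
    rw [c1, c2]
    exact mul_le_mul_of_nonneg_left k (by positivity)
  refine ⟨hmono, ?_⟩
  rintro ⟨t1, ht1⟩
  set S := {t : ℝ | 0 < t ∧ β * A ≤ φ t} with hSdef
  set K := B * Real.logb 2 (1 + h * pmax / σ2) with hKdef
  have hKpos : 0 < K :=
    mul_pos hB (Real.logb_pos one_lt_two (by nlinarith [div_pos (mul_pos hh hpmax) hσ]))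
  set ε := β * A / K with hεdef
  have hεpos : 0 < ε := div_pos (mul_pos hβ hA) hKpos
  have hlb : ∀ t ∈ S, ε ≤ t := by
    rintro t ⟨htp, htf⟩
    have hmin0 : 0 ≤ min ν₀ (pmax * t) := le_min hν.le (by positivity)
    have harg : h * min ν₀ (pmax * t) / (t * σ2) ≤ h * pmax / σ2 := by
      have h3 : h * min ν₀ (pmax * t) / (t * σ2) ≤ h * (pmax * t) / (t * σ2) := by
        gcongr
        exact min_le_right _ _
      have h4 : h * (pmax * t) / (t * σ2) = h * pmax / σ2 := by field_simp
      linarith [h3, h4.le]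
    have hφle : φ t ≤ t * K := by
      simp only [φ, hKdef]
      gcongr
      all_goals first | exact hB.le | exact one_lt_two | positivity
    rw [hεdef, div_le_iff₀ hKpos]
    nlinarith
  have hbdd : BddBelow S := ⟨ε, hlb⟩
  set tstar := sInf S with htsdef
  have htspos : 0 < tstar :=
    lt_of_lt_of_le hεpos (le_csInf ⟨t1, ht1⟩ hlb)
  have hcont : ∀ t : ℝ, 0 < t → ContinuousAt φ t := by
    intro t htp
    have hu : ContinuousAt (fun t => 1 + h * min ν₀ (pmax * t) / (t * σ2)) t := by
      apply continuousAt_const.add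
      apply ContinuousAt.div
      · exact continuousAt_const.mul (continuousAt_const.min (continuousAt_const.mul continuousAt_id))
      · exact continuousAt_id.mul continuousAt_const
      · exact ne_of_gt (mul_pos htp hσ)
    have hmin0 : 0 ≤ min ν₀ (pmax * t) := le_min hν.le (by positivity)
    have hupos : 0 < 1 + h * min ν₀ (pmax * t) / (t * σ2) := by positivity
    have hl : ContinuousAt (fun t => Real.logb 2 (1 + h * min ν₀ (pmax * t) / (t * σ2))) t := by
      simp only [Real.logb]
      exact (hu.log (ne_of_gt hupos)).div_const _
    exact continuousAt_id.mul (continuousAt_const.mul hl)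
  have hSsub : S ⊆ {t | ε ≤ t ∧ β * A ≤ φ t} := fun t ht => ⟨hlb t ht, ht.2⟩
  have hclosed : IsClosed {t : ℝ | ε ≤ t ∧ β * A ≤ φ t} := by
    have hco : ContinuousOn φ (Set.Ici ε) := fun t htm =>
      (hcont t (lt_of_lt_of_le hεpos htm)).continuousWithinAt
    have heq : {t : ℝ | ε ≤ t ∧ β * A ≤ φ t} = Set.Ici ε ∩ φ ⁻¹' Set.Ici (β * A) := by
      ext t; simp [Set.mem_Ici]
    rw [heq]
    exact hco.preimage_isClosed_of_isClosed isClosed_Ici isClosed_Ici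
  have hmem : tstar ∈ S := by
    have h1 : tstar ∈ closure S := csInf_mem_closure ⟨t1, ht1⟩ hbdd
    have h2 : tstar ∈ {t | ε ≤ t ∧ β * A ≤ φ t} := by
      have := closure_mono hSsub h1
      rwa [hclosed.closure_eq] at this
    exact ⟨lt_of_lt_of_le hεpos h2.1, h2.2⟩
  refine ⟨tstar, hmem.1, ?_⟩
  ext t
  simp only [hSdef, Set.mem_setOf_eq, Set.mem_Ici]
  constructor
  · intro ht
    exact csInf_le hbdd ht
  · intro ht
    have htp : 0 < t := lt_of_lt_of_le hmem.1 ht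
    exact ⟨htp, le_trans hmem.2 (hmono (Set.mem_Ioi.2 hmem.1) (Set.mem_Ioi.2 htp) ht)⟩
end
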